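/- Let z₁ < z₂ < … < z_m be real numbers with Σ_{j=1}^{m−1} (z_{j+1} − z_j) ≤ 1, and let the Gaussian mechanism add N(0,σ²) noise. Partition ℝ into Voronoi cells Θ_i around the z_i. Then Σ_{i=1}^m Pr(z_i + N(0,σ²) ∈ Θ_i) = 2·Σ_{j=1}^{m−1} Φ(Δ_j/(2σ)) − (m−2) where Δ_j = z_{j+1} − z_j, and consequently (1/m)(Σ_i Pr(z_i + N ∈ Θ_i) − 1) ≤ ((m−1)/m)·(2Φ(1/(2σ(m−1))) − 1). -/

import Mathlib

open MeasureTheory ProbabilityTheory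

/-- The standard normal cumulative distribution function `Φ`. -/
noncomputable def stdGaussCDF (x : ℝ) : ℝ :=
  ∫ t in Set.Iic x, Real.exp (-t ^ 2 / 2) / Real.sqrt (2 * Real.pi)

open scoped NNReal

noncomputable def stdPdf (x : ℝ) : ℝ := Real.exp (-x ^ 2 / 2) / Real.sqrt (2 * Real.pi)

lemma gpdf01 : gaussianPDFReal 0 1 = stdPdf := by
  funext x
  simp only [gaussianPDFReal, stdPdf, NNReal.coe_one, mul_one, sub_zero]
  rw [mul_comm, ← div_eq_mul_inv]

lemma stdPdf_integrable : Integrable stdPdf := by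
  rw [← gpdf01]; exact integrable_gaussianPDFReal 0 1

lemma stdPdf_continuous : Continuous stdPdf := by
  unfold stdPdf
  exact (Real.continuous_exp.comp (by continuity)).div_const _

lemma stdGaussCDF_eq (y : ℝ) : stdGaussCDF y = ((gaussianReal 0 1) (Set.Iic y)).toReal := by
  rw [gaussianReal_apply_eq_integral 0 one_ne_zero,
    ENNReal.toReal_ofReal (setIntegral_nonneg measurableSet_Iic
      (fun x _ => gaussianPDFReal_nonneg 0 1 x)), gpdf01]
  rfl

lemma stdGaussCDF_mono : Monotone stdGaussCDF := fun a b hab => by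
  rw [stdGaussCDF_eq, stdGaussCDF_eq]
  exact ENNReal.toReal_mono (measure_ne_top _ _) (measure_mono (Set.Iic_subset_Iic.2 hab))

lemma gauss_rep (μ σ : ℝ) (hσ : 0 < σ) :
    gaussianReal μ (Real.toNNReal (σ^2)) = ((gaussianReal 0 1).map (σ * ·)).map (· + μ) := by
  rw [gaussianReal_map_const_mul, gaussianReal_map_add_const]
  have h1 : (⟨σ^2, sq_nonneg σ⟩ : ℝ≥0) * 1 = Real.toNNReal (σ^2) := by
    ext; simp [Real.coe_toNNReal _ (sq_nonneg σ)]
  rw [mul_zero, zero_add]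
  exact congrArg (gaussianReal μ) h1.symm

lemma gauss_null {μ : ℝ} {v : ℝ≥0} (hv : v ≠ 0) (a : ℝ) : gaussianReal μ v {a} = 0 :=
  gaussianReal_absolutelyContinuous μ hv (measure_singleton a)

lemma gauss_insert {μ : ℝ} {v : ℝ≥0} (hv : v ≠ 0) (a : ℝ) (s : Set ℝ) :
    gaussianReal μ v (insert a s) = gaussianReal μ v s := by
  refine le_antisymm ?_ (measure_mono (Set.subset_insert _ _))
  rw [Set.insert_eq]
  refine (measure_union_le _ _).trans ?_
  rw [gauss_null hv a, zero_add]

lemma gauss_Iic {μ σ : ℝ} (hσ : 0 < σ) (b : ℝ) :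
    ((gaussianReal μ (Real.toNNReal (σ^2))) (Set.Iic b)).toReal = stdGaussCDF ((b - μ)/σ) := by
  rw [gauss_rep μ σ hσ, Measure.map_apply (measurable_add_const μ) measurableSet_Iic,
    Set.preimage_add_const_Iic,
    Measure.map_apply (measurable_const_mul σ) measurableSet_Iic,
    Set.preimage_const_mul_Iic₀ _ hσ, stdGaussCDF_eq]

lemma stdGaussCDF_neg (y : ℝ) : stdGaussCDF (-y) = 1 - stdGaussCDF y := by
  have hmap : (gaussianReal 0 1).map ((-1 : ℝ) * ·) = gaussianReal 0 1 := by
    rw [gaussianReal_map_const_mul]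
    norm_num
  have h1 : gaussianReal 0 1 (Set.Iic (-y)) = gaussianReal 0 1 (Set.Ici y) := by
    conv_lhs => rw [← hmap]
    rw [Measure.map_apply (measurable_const_mul _) measurableSet_Iic]
    congr 1
    ext x
    simp only [Set.mem_preimage, Set.mem_Iic, Set.mem_Ici]
    constructor <;> intro h <;> linarith
  have h2 : gaussianReal 0 1 (Set.Ici y) = gaussianReal 0 1 (Set.Ioi y) := by
    rw [← Set.Ioi_insert, gauss_insert one_ne_zero]
  rw [stdGaussCDF_eq, stdGaussCDF_eq, h1, h2, ← Set.compl_Iic,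
    prob_compl_eq_one_sub measurableSet_Iic,
    ENNReal.toReal_sub_of_le prob_le_one ENNReal.one_ne_top, ENNReal.toReal_one]

lemma gauss_Ici {μ σ : ℝ} (hσ : 0 < σ) (a : ℝ) :
    ((gaussianReal μ (Real.toNNReal (σ^2))) (Set.Ici a)).toReal = stdGaussCDF ((μ - a)/σ) := by
  have hv : Real.toNNReal (σ^2) ≠ 0 := by
    simp [Real.toNNReal_eq_zero, not_le]
    positivity
  rw [← Set.Ioi_insert, gauss_insert hv, ← Set.compl_Iic,
    prob_compl_eq_one_sub measurableSet_Iic,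
    ENNReal.toReal_sub_of_le prob_le_one ENNReal.one_ne_top, ENNReal.toReal_one,
    gauss_Iic hσ]
  have : (μ - a)/σ = -((a - μ)/σ) := by ring
  rw [this, stdGaussCDF_neg]

lemma gauss_Icc {μ σ : ℝ} (hσ : 0 < σ) {a b : ℝ} (hab : a ≤ b) :
    ((gaussianReal μ (Real.toNNReal (σ^2))) (Set.Icc a b)).toReal
      = stdGaussCDF ((b - μ)/σ) + stdGaussCDF ((μ - a)/σ) - 1 := by
  have hv : Real.toNNReal (σ^2) ≠ 0 := by
    simp [Real.toNNReal_eq_zero, not_le]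
    positivity
  rw [← Set.Ioc_insert_left hab, gauss_insert hv, ← (show Set.Iic b \ Set.Iic a = Set.Ioc a b by
      ext x; simp only [Set.mem_diff, Set.mem_Iic, Set.mem_Ioc, not_le]; tauto),
    measure_diff (Set.Iic_subset_Iic.2 hab) measurableSet_Iic.nullMeasurableSet
      (measure_ne_top _ _),
    ENNReal.toReal_sub_of_le (measure_mono (Set.Iic_subset_Iic.2 hab)) (measure_ne_top _ _),
    gauss_Iic hσ, gauss_Iic hσ]
  have : (μ - a)/σ = -((a - μ)/σ) := by ring
  rw [this, stdGaussCDF_neg]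
  ring

lemma stdGaussCDF_hasDeriv (x : ℝ) : HasDerivAt stdGaussCDF (stdPdf x) x := by
  have key : stdGaussCDF = fun u => stdGaussCDF 0 + ∫ t in (0:ℝ)..u, stdPdf t := by
    funext u
    have h := intervalIntegral.integral_Iic_sub_Iic (stdPdf_integrable.integrableOn)
      (stdPdf_integrable.integrableOn) (a := (0:ℝ)) (b := u)
    simp only [stdGaussCDF, stdPdf] at h ⊢
    linarith
  rw [key]
  exact (intervalIntegral.integral_hasDerivAt_right
    (stdPdf_integrable.intervalIntegrable)
    (stdPdf_continuous.stronglyMeasurable.stronglyMeasurableAtFilter)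
    (stdPdf_continuous.continuousAt)).const_add _

lemma stdGaussCDF_concave : ConcaveOn ℝ (Set.Ici (0:ℝ)) stdGaussCDF := by
  refine AntitoneOn.concaveOn_of_deriv (convex_Ici 0)
    (fun x _ => (stdGaussCDF_hasDeriv x).continuousAt.continuousWithinAt)
    (fun x _ => (stdGaussCDF_hasDeriv x).differentiableAt.differentiableWithinAt) ?_
  intro a ha b hb hab
  rw [interior_Ici, Set.mem_Ioi] at ha hb
  rw [(stdGaussCDF_hasDeriv a).deriv, (stdGaussCDF_hasDeriv b).deriv]
  unfold stdPdf
  gcongr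

lemma half_lt {a b x : ℝ} (hab : a < b) : |x - a| ≤ |x - b| ↔ x ≤ (a + b)/2 := by
  rw [← sq_le_sq]
  constructor <;> intro h <;> nlinarith

lemma half_gt {a b x : ℝ} (hab : b < a) : |x - a| ≤ |x - b| ↔ (b + a)/2 ≤ x := by
  rw [← sq_le_sq]
  constructor <;> intro h <;> nlinarith

lemma cell_eq {m : ℕ} (z : Fin m → ℝ) (hz : StrictMono z) (i : Fin m) :
    {x : ℝ | ∀ k, |x - z i| ≤ |x - z k|} =
      (if h : i.1 + 1 < m then Set.Iic ((z i + z ⟨i.1 + 1, h⟩)/2) else Set.univ) ∩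
      (if h : 0 < i.1 then Set.Ici ((z ⟨i.1 - 1, by omega⟩ + z i)/2) else Set.univ) := by
  ext x
  simp only [Set.mem_setOf_eq, Set.mem_inter_iff]
  constructor
  · intro h
    constructor
    · split_ifs with h1
      · have := h ⟨i.1 + 1, h1⟩
        rw [half_lt (hz (by simp [Fin.lt_def]))] at this
        exact this
      · trivial
    · split_ifs with h2
      · have := h ⟨i.1 - 1, by omega⟩
        rw [half_gt (hz (by simp [Fin.lt_def]; omega))] at this
        exact this
      · trivial
  · rintro ⟨h1, h2⟩ k
    rcases lt_trichotomy k.1 i.1 with hk | hk | hk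
    · rw [half_gt (hz (Fin.lt_def.mpr hk))]
      rw [dif_pos (by omega)] at h2
      have hzk : z k ≤ z ⟨i.1 - 1, by omega⟩ := hz.monotone (by simp [Fin.le_def]; omega)
      have : (z k + z i)/2 ≤ (z ⟨i.1 - 1, by omega⟩ + z i)/2 := by linarith
      exact this.trans h2
    · have : k = i := Fin.ext hk
      rw [this]
    · rw [half_lt (hz (Fin.lt_def.mpr hk))]
      rw [dif_pos (by omega : i.1 + 1 < m)] at h1
      have hzk : z ⟨i.1 + 1, by omega⟩ ≤ z k := hz.monotone (by simp [Fin.le_def]; omega)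
      have : (z i + z ⟨i.1 + 1, by omega⟩)/2 ≤ (z i + z k)/2 := by linarith
      exact h1.trans this

/-- Let `z₁ < … < z_m` be reals with `Σ_j (z_{j+1} − z_j) ≤ 1`, and add
`N(0,σ²)` Gaussian noise.  With `ℝ` partitioned into the Voronoi cells
`Θ_i = {x | ∀ k, |x − z_i| ≤ |x − z_k|}` around the `z_i`,
`Σ_i Pr(z_i + N(0,σ²) ∈ Θ_i) = 2·Σ_j Φ(Δ_j/(2σ)) − (m−2)` with `Δ_j = z_{j+1} − z_j`, and
consequently `(1/m)(Σ_i Pr(z_i + N ∈ Θ_i) − 1) ≤ ((m−1)/m)·(2Φ(1/(2σ(m−1))) − 1)`. -/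
theorem gaussian_voronoi_sum (m : ℕ) (hm : 2 ≤ m) (z : Fin m → ℝ) (hz : StrictMono z)
    (hgap : (∑ j : Fin (m - 1),
        (z ⟨j.1 + 1, by have := j.2; omega⟩ - z ⟨j.1, by have := j.2; omega⟩)) ≤ 1)
    (σ : ℝ) (hσ : 0 < σ) :
    (∑ i, ((gaussianReal (z i) (Real.toNNReal (σ ^ 2)))
          {x : ℝ | ∀ k, |x - z i| ≤ |x - z k|}).toReal) =
      2 * (∑ j : Fin (m - 1),
          stdGaussCDF ((z ⟨j.1 + 1, by have := j.2; omega⟩ -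
            z ⟨j.1, by have := j.2; omega⟩) / (2 * σ))) - ((m : ℝ) - 2) ∧
    (1 / (m : ℝ)) *
        ((∑ i, ((gaussianReal (z i) (Real.toNNReal (σ ^ 2)))
            {x : ℝ | ∀ k, |x - z i| ≤ |x - z k|}).toReal) - 1) ≤
      (((m : ℝ) - 1) / m) * (2 * stdGaussCDF (1 / (2 * σ * ((m : ℝ) - 1))) - 1) := by
  have hMpos : (0:ℝ) < (m:ℝ) - 1 := by
    have : (2:ℝ) ≤ (m:ℝ) := by exact_mod_cast hm
    linarith
  set Z : ℕ → ℝ := fun n => z ⟨min n (m-1), by omega⟩ with hZdef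
  have hZ : ∀ n (h : n < m), Z n = z ⟨n, h⟩ := by
    intro n h
    simp only [hZdef]
    congr 1
    exact Fin.ext (by simp; omega)
  set f : ℕ → ℝ := fun j => stdGaussCDF ((Z (j+1) - Z j)/(2*σ)) with hfdef
  -- conversion of the goal's Fin (m-1) sum
  have hTgoal : (∑ j : Fin (m - 1),
      stdGaussCDF ((z ⟨j.1 + 1, by have := j.2; omega⟩ -
        z ⟨j.1, by have := j.2; omega⟩) / (2 * σ)))
      = ∑ j ∈ Finset.range (m-1), f j := by
    rw [← Fin.sum_univ_eq_sum_range (fun j => f j) (m-1)]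
    refine Finset.sum_congr rfl fun j _ => ?_
    simp only [hfdef]
    rw [hZ (j.1+1) (by have := j.2; omega), hZ j.1 (by have := j.2; omega)]
  have hgap' : (∑ j ∈ Finset.range (m-1), (Z (j+1) - Z j)) ≤ 1 := by
    rw [← Fin.sum_univ_eq_sum_range (fun j => Z (j+1) - Z j) (m-1)]
    refine le_trans (le_of_eq (Finset.sum_congr rfl fun j _ => ?_)) hgap
    rw [hZ (j.1+1) (by have := j.2; omega), hZ j.1 (by have := j.2; omega)]
  -- per-cell measure
  have hP : ∀ i : Fin m, ((gaussianReal (z i) (Real.toNNReal (σ ^ 2)))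
      {x : ℝ | ∀ k, |x - z i| ≤ |x - z k|}).toReal
      = (if i.1 + 1 < m then f i.1 else 1) + (if 0 < i.1 then f (i.1-1) else 1) - 1 := by
    intro i
    rw [cell_eq z hz i]
    by_cases h1 : i.1 + 1 < m <;> by_cases h2 : 0 < i.1
    · rw [dif_pos h1, dif_pos h2, if_pos h1, if_pos h2, Set.inter_comm, Set.Ici_inter_Iic]
      have hlt1 : z ⟨i.1 - 1, by omega⟩ < z i :=
        hz (Fin.lt_def.mpr (show i.1 - 1 < i.1 by omega))
      have hlt2 : z i < z ⟨i.1 + 1, h1⟩ :=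
        hz (Fin.lt_def.mpr (show i.1 < i.1 + 1 by omega))
      rw [gauss_Icc hσ (by linarith)]
      have e1 : ((z i + z ⟨i.1 + 1, h1⟩)/2 - z i)/σ = (z ⟨i.1 + 1, h1⟩ - z i)/(2*σ) := by
        field_simp; ring
      have e2 : (z i - (z ⟨i.1 - 1, by omega⟩ + z i)/2)/σ
          = (z i - z ⟨i.1 - 1, by omega⟩)/(2*σ) := by
        field_simp; ring
      rw [e1, e2]
      simp only [hfdef]
      rw [hZ (i.1+1) (by omega), hZ i.1 i.2, hZ (i.1-1+1) (by omega), hZ (i.1-1) (by omega)]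
      have e3 : i.1 - 1 + 1 = i.1 := by omega
      simp only [e3, Fin.eta]
    · rw [dif_pos h1, dif_neg h2, if_pos h1, if_neg h2, Set.inter_univ, gauss_Iic hσ]
      have e1 : ((z i + z ⟨i.1 + 1, h1⟩)/2 - z i)/σ = (z ⟨i.1 + 1, h1⟩ - z i)/(2*σ) := by
        field_simp; ring
      rw [e1]
      simp only [hfdef]
      rw [hZ (i.1+1) (by omega), hZ i.1 i.2]
      simp only [Fin.eta]
      ring
    · rw [dif_neg h1, dif_pos h2, if_neg h1, if_pos h2, Set.univ_inter, gauss_Ici hσ]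
      have e2 : (z i - (z ⟨i.1 - 1, by omega⟩ + z i)/2)/σ
          = (z i - z ⟨i.1 - 1, by omega⟩)/(2*σ) := by
        field_simp; ring
      rw [e2]
      simp only [hfdef]
      rw [hZ (i.1-1+1) (by omega), hZ (i.1-1) (by omega)]
      have e3 : i.1 - 1 + 1 = i.1 := by omega
      simp only [e3, Fin.eta]
      ring
    · exfalso; have := i.2; omega
  -- the total sum
  have hA : (∑ i : Fin m, (if i.1 + 1 < m then f i.1 else 1))
      = (∑ j ∈ Finset.range (m-1), f j) + 1 := by
    rw [Fin.sum_univ_eq_sum_range (fun j => if j + 1 < m then f j else 1) m,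
      show m = (m-1)+1 from by omega, Finset.sum_range_succ, if_neg (by omega)]
    congr 1
    refine Finset.sum_congr rfl fun j hj => ?_
    rw [Finset.mem_range] at hj
    rw [if_pos (by omega)]
  have hB : (∑ i : Fin m, (if 0 < i.1 then f (i.1 - 1) else 1))
      = (∑ j ∈ Finset.range (m-1), f j) + 1 := by
    rw [Fin.sum_univ_eq_sum_range (fun j => if 0 < j then f (j - 1) else 1) m,
      show m = (m-1)+1 from by omega, Finset.sum_range_succ', if_neg (by omega)]
    congr 1
  have hSum : (∑ i, ((gaussianReal (z i) (Real.toNNReal (σ ^ 2)))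
      {x : ℝ | ∀ k, |x - z i| ≤ |x - z k|}).toReal)
      = 2 * (∑ j ∈ Finset.range (m-1), f j) - ((m : ℝ) - 2) := by
    rw [Finset.sum_congr rfl (fun i _ => hP i), Finset.sum_sub_distrib,
      Finset.sum_add_distrib, hA, hB, Finset.sum_const, Finset.card_univ,
      Fintype.card_fin, nsmul_eq_mul, mul_one]
    ring
  -- Jensen bound
  have hTle : (∑ j ∈ Finset.range (m-1), f j)
      ≤ ((m:ℝ) - 1) * stdGaussCDF (1 / (2 * σ * ((m : ℝ) - 1))) := by
    have hcast : ((m - 1 : ℕ) : ℝ) = (m:ℝ) - 1 := by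
      push_cast [Nat.cast_sub (by omega : 1 ≤ m)]; ring
    have hJ := stdGaussCDF_concave.le_map_sum (t := Finset.range (m-1))
      (w := fun _ => 1/((m:ℝ)-1)) (p := fun j => (Z (j+1) - Z j)/(2*σ))
      (fun j _ => by positivity)
      (by rw [Finset.sum_const, Finset.card_range, nsmul_eq_mul, hcast]
          field_simp)
      (fun j hj => by
        rw [Finset.mem_range] at hj
        have hlt : Z j < Z (j+1) := by
          rw [hZ j (by omega), hZ (j+1) (by omega)]
          exact hz (Fin.lt_def.mpr (show j < j + 1 by omega))
        simp only [Set.mem_Ici]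
        exact div_nonneg (by linarith) (by positivity))
    simp only [smul_eq_mul] at hJ
    rw [← Finset.mul_sum, ← Finset.mul_sum] at hJ
    have harg : (1/((m:ℝ)-1)) * (∑ j ∈ Finset.range (m-1), (Z (j+1) - Z j)/(2*σ))
        ≤ 1 / (2 * σ * ((m : ℝ) - 1)) := by
      rw [← Finset.sum_div]
      have e : (1/((m:ℝ)-1)) * ((∑ j ∈ Finset.range (m-1), (Z (j+1) - Z j))/(2*σ))
          = (∑ j ∈ Finset.range (m-1), (Z (j+1) - Z j)) / (2 * σ * ((m:ℝ)-1)) := by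
        rw [div_mul_div_comm, one_mul, mul_comm]
      rw [e]
      gcongr
    have h3 := hJ.trans (stdGaussCDF_mono harg)
    calc (∑ j ∈ Finset.range (m-1), f j)
        = ((m:ℝ)-1) * ((1/((m:ℝ)-1)) * (∑ j ∈ Finset.range (m-1), f j)) := by
          field_simp
      _ ≤ ((m:ℝ)-1) * stdGaussCDF (1 / (2 * σ * ((m : ℝ) - 1))) :=
          mul_le_mul_of_nonneg_left h3 hMpos.le
  constructor
  · rw [hSum, hTgoal]
  · rw [hSum]
    have hmR : (0:ℝ) < (m:ℝ) := by positivity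
    have h2 : 2 * (∑ j ∈ Finset.range (m-1), f j) - ((m:ℝ) - 2) - 1
        ≤ ((m:ℝ)-1) * (2 * stdGaussCDF (1 / (2 * σ * ((m : ℝ) - 1))) - 1) := by
      nlinarith [hTle]
    calc (1 / (m:ℝ)) * (2 * (∑ j ∈ Finset.range (m-1), f j) - ((m:ℝ) - 2) - 1)
        = (2 * (∑ j ∈ Finset.range (m-1), f j) - ((m:ℝ) - 2) - 1) * (1/(m:ℝ)) := by ring
      _ ≤ (((m:ℝ)-1) * (2 * stdGaussCDF (1 / (2 * σ * ((m : ℝ) - 1))) - 1)) * (1/(m:ℝ)) :=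
          mul_le_mul_of_nonneg_right h2 (by positivity)
      _ = (((m : ℝ) - 1) / m) * (2 * stdGaussCDF (1 / (2 * σ * ((m : ℝ) - 1))) - 1) := by
          ring
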